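/- arXiv:1906.10507 — 2 statements merged into one kernel-verified Lean document; each statement's English description precedes it below -/
import Mathlib

section
/- Let V be a real Hilbert space, a symmetric continuous coercive bilinear form, and suppose V_h ⊂ Ṽ_h ⊂ V with Ṽ_h = V_h ⊕ W_h (direct sum of closed subspaces). Let u_h ∈ V_h and ũ_h ∈ Ṽ_h be the Galerkin solutions in V_h and Ṽ_h respectively. If the saturation assumption ‖u − ũ_h‖_E ≤ β ‖u − u_h‖_E holds with β < 1, then ‖ũ_h − u_h‖_E ≤ ‖u − u_h‖_E ≤ (1/√(1−β²)) ‖ũ_h − u_h‖_E. -/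
/-- Reliability/efficiency of hierarchical error estimation under the saturation assumption. -/
theorem stmt8 {V : Type*} [NormedAddCommGroup V] [InnerProductSpace ℝ V] [CompleteSpace V]
    (a : V → V → ℝ) (F : V → ℝ) (M α : ℝ) (hα : 0 < α)
    (ha_add_left : ∀ u v w : V, a (u + v) w = a u w + a v w)
    (ha_smul_left : ∀ (c : ℝ) (u v : V), a (c • u) v = c * a u v)
    (ha_add_right : ∀ u v w : V, a u (v + w) = a u v + a u w)
    (ha_smul_right : ∀ (c : ℝ) (u v : V), a u (c • v) = c * a u v)
    (ha_symm : ∀ u v : V, a u v = a v u)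
    (ha_cont : ∀ u v : V, |a u v| ≤ M * ‖u‖ * ‖v‖)
    (ha_coer : ∀ v : V, α * ‖v‖ ^ 2 ≤ a v v)
    (hF_add : ∀ u v : V, F (u + v) = F u + F v)
    (hF_smul : ∀ (c : ℝ) (v : V), F (c • v) = c * F v)
    (hF_cont : ∃ C : ℝ, ∀ v : V, |F v| ≤ C * ‖v‖)
    (Vh Wh Vth : Submodule ℝ V)
    (hVh_closed : IsClosed (Vh : Set V)) (hWh_closed : IsClosed (Wh : Set V))
    (hVth_closed : IsClosed (Vth : Set V))
    (hsub : Vh ≤ Vth) (hsum : Vh ⊔ Wh = Vth) (hdisjoint : Vh ⊓ Wh = ⊥)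
    (u uh uth : V) (huh_mem : uh ∈ Vh) (huth_mem : uth ∈ Vth)
    (hu : ∀ v : V, a u v = F v)
    (huh : ∀ vh ∈ Vh, a uh vh = F vh)
    (huth : ∀ vt ∈ Vth, a uth vt = F vt)
    (β : ℝ) (hβ0 : 0 ≤ β) (hβ1 : β < 1)
    (hsat : Real.sqrt (a (u - uth) (u - uth)) ≤ β * Real.sqrt (a (u - uh) (u - uh))) :
    Real.sqrt (a (uth - uh) (uth - uh)) ≤ Real.sqrt (a (u - uh) (u - uh)) ∧
      Real.sqrt (a (u - uh) (u - uh)) ≤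
        (1 / Real.sqrt (1 - β ^ 2)) * Real.sqrt (a (uth - uh) (uth - uh)) := by
  -- abbreviations
  have hnn : ∀ x : V, 0 ≤ a x x := fun x =>
    le_trans (by positivity) (ha_coer x)
  set P := a (u - uh) (u - uh) with hP
  set Q := a (u - uth) (u - uth) with hQ
  set R := a (uth - uh) (uth - uh) with hR
  have hsub_left : ∀ x y z : V, a (x - y) z = a x z - a y z := by
    intro x y z
    have : a (x + (-1 : ℝ) • y) z = a x z + (-1) * a y z := by
      rw [ha_add_left, ha_smul_left]
    simpa [sub_eq_add_neg] using this
  have hsub_right : ∀ x y z : V, a x (y - z) = a x y - a x z := by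
    intro x y z
    have : a x (y + (-1 : ℝ) • z) = a x y + (-1) * a x z := by
      rw [ha_add_right, ha_smul_right]
    simpa [sub_eq_add_neg] using this
  -- orthogonality
  have hmem : uth - uh ∈ Vth := Vth.sub_mem huth_mem (hsub huh_mem)
  have horth : a (u - uth) (uth - uh) = 0 := by
    rw [hsub_left]
    rw [hu _, huth _ hmem]
    ring
  -- Pythagoras
  have hpyth : P = Q + R := by
    have hdecomp : u - uh = (u - uth) + (uth - uh) := by abel
    rw [hP, hdecomp, ha_add_left, ha_add_right, ha_add_right, horth,
      ha_symm (uth - uh) (u - uth), horth]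
    ring
  have hPnn : 0 ≤ P := hnn _
  have hQnn : 0 ≤ Q := hnn _
  have hRnn : 0 ≤ R := hnn _
  constructor
  · apply Real.sqrt_le_sqrt
    rw [hpyth]; linarith
  · -- Q ≤ β² P
    have hQle : Q ≤ β ^ 2 * P := by
      have h1 : Real.sqrt Q ^ 2 ≤ (β * Real.sqrt P) ^ 2 := by
        apply pow_le_pow_left₀ (Real.sqrt_nonneg _) hsat
      rw [Real.sq_sqrt hQnn] at h1
      calc Q ≤ (β * Real.sqrt P) ^ 2 := h1
        _ = β ^ 2 * Real.sqrt P ^ 2 := by ring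
        _ = β ^ 2 * P := by rw [Real.sq_sqrt hPnn]
    have hkey : (1 - β ^ 2) * P ≤ R := by nlinarith
    have hbpos : 0 < 1 - β ^ 2 := by nlinarith
    have hsqpos : 0 < Real.sqrt (1 - β ^ 2) := Real.sqrt_pos.mpr hbpos
    rw [one_div, mul_comm, ← div_eq_mul_inv, le_div_iff₀ hsqpos,
      ← Real.sqrt_mul hPnn]
    exact Real.sqrt_le_sqrt (by linarith [hkey, mul_comm P (1 - β ^ 2)])
end

section
/- The hierarchical B-spline basis HB = ∪_l HB^l, where HB^l consists of B-splines of level l whose support is contained in Ω^l ∪ Ω^l_+ (elements of level ≥ l) and intersects at least one element of level l, is a linearly independent set of functions. -/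
/-- Linear independence of the hierarchical B-spline basis (1D formalization).
`B l` is the (locally linearly independent) B-spline basis of level `l`, the spaces are
nested (each level-`l` basis function lies in the span of the next level), and
`dom l` is the union of the active elements of level `l` (pairwise disjoint across levels).
The hierarchical basis `HB` selects, at each level `l ≤ N`, the functions of `B l` whose
support is contained in the active region of levels `≥ l` and meets the active region of
level `l`.  Then `HB` is linearly independent. -/
theorem stmt17 (N : ℕ) (B : ℕ → Finset (ℝ → ℝ)) (dom : ℕ → Set ℝ)
    (hdom_open : ∀ l, IsOpen (dom l))
    (hdom_disj : ∀ l l', l ≠ l' → Disjoint (dom l) (dom l'))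
    (hnested : ∀ l, ∀ b ∈ B l, (b : ℝ → ℝ) ∈ Submodule.span ℝ (B (l + 1) : Set (ℝ → ℝ)))
    (hlocind : ∀ l (O : Set ℝ), IsOpen O → O.Nonempty →
      LinearIndependent ℝ
        (fun b : {b : ℝ → ℝ // b ∈ B l ∧ ¬ ∀ x ∈ O, b x = 0} => O.restrict (b : ℝ → ℝ)))
    (HB : Set (ℝ → ℝ))
    (hHB : HB = ⋃ l ≤ N, {b : ℝ → ℝ | b ∈ B l ∧
      (Function.support b ⊆ ⋃ l' ∈ Set.Ici l, dom l') ∧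
      (Function.support b ∩ dom l).Nonempty}) :
    LinearIndependent ℝ (fun b : HB => (b : ℝ → ℝ)) := by
  classical
  -- The defining property of level `l` membership.
  set P : ℕ → (ℝ → ℝ) → Prop := fun l b => b ∈ B l ∧
      (Function.support b ⊆ ⋃ l' ∈ Set.Ici l, dom l') ∧
      (Function.support b ∩ dom l).Nonempty with hPdef
  have hex' : ∀ f : ℝ → ℝ, f ∈ HB → ∃ l, P l f := by
    intro f hb
    rw [hHB] at hb
    simp only [Set.mem_iUnion, Set.mem_setOf_eq] at hb
    obtain ⟨l, _, h⟩ := hb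
    exact ⟨l, h⟩
  have hex : ∀ b : HB, ∃ l, P l (b : ℝ → ℝ) := fun b => hex' b b.2
  -- `lev b` = minimal level at which `b` qualifies.
  set lev : HB → ℕ := fun b => sInf {l | P l (b : ℝ → ℝ)} with hlevdef
  have hlev : ∀ b : HB, P (lev b) (b : ℝ → ℝ) := by
    intro b
    exact Nat.sInf_mem (hex b)
  rw [linearIndependent_iff']
  intro s g hsum i₀ hi₀s
  by_contra hgi₀
  -- the set of indices with nonzero coefficients
  set T : Finset HB := s.filter (fun i => g i ≠ 0) with hTdef
  have hi₀T : i₀ ∈ T := Finset.mem_filter.mpr ⟨hi₀s, hgi₀⟩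
  have hTne : (T.image lev).Nonempty := ⟨lev i₀, Finset.mem_image_of_mem _ hi₀T⟩
  set l₀ : ℕ := (T.image lev).min' hTne with hl₀def
  obtain ⟨i₁, hi₁T, hi₁lev⟩ := Finset.mem_image.mp ((T.image lev).min'_mem hTne)
  rw [← hl₀def] at hi₁lev
  have hl₀le : ∀ i ∈ T, l₀ ≤ lev i := fun i hi =>
    Finset.min'_le _ _ (Finset.mem_image_of_mem _ hi)
  -- the minimal active region is open and nonempty
  have hP₁ : P l₀ (i₁ : ℝ → ℝ) := hi₁lev ▸ hlev i₁
  obtain ⟨x₀, hx₀supp, hx₀dom⟩ := hP₁.2.2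
  have hOne : (dom l₀).Nonempty := ⟨x₀, hx₀dom⟩
  -- functions of strictly higher level vanish on `dom l₀`
  have hvanish : ∀ i ∈ T, lev i ≠ l₀ → ∀ x ∈ dom l₀, (i : ℝ → ℝ) x = 0 := by
    intro i hiT hne x hx
    by_contra hix
    have hxsupp : x ∈ Function.support (i : ℝ → ℝ) := hix
    have := (hlev i).2.1 hxsupp
    simp only [Set.mem_iUnion, Set.mem_Ici] at this
    obtain ⟨l', hl', hxl'⟩ := this
    have hl'ne : l' ≠ l₀ := by
      intro h
      exact hne (le_antisymm (h ▸ hl') (hl₀le i hiT))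
    exact (hdom_disj l₀ l' (fun h => hl'ne h.symm)).ne_of_mem hx hxl' rfl
  -- pointwise: on `dom l₀` only the minimal-level terms survive
  have hpt : ∀ x ∈ dom l₀,
      ∑ i ∈ T.filter (fun i => lev i = l₀), g i • (i : ℝ → ℝ) x = 0 := by
    intro x hx
    have h1 : ∑ i ∈ s, g i • (i : ℝ → ℝ) x = 0 := by
      have := congrFun hsum x
      simpa [Finset.sum_apply] using this
    have h2 : ∑ i ∈ T, g i • (i : ℝ → ℝ) x = ∑ i ∈ s, g i • (i : ℝ → ℝ) x := by
      refine Finset.sum_subset (Finset.filter_subset _ _) ?_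
      intro i his hiT
      have : g i = 0 := by
        by_contra h
        exact hiT (Finset.mem_filter.mpr ⟨his, h⟩)
      simp [this]
    have h3 : ∑ i ∈ T.filter (fun i => lev i = l₀), g i • (i : ℝ → ℝ) x
        = ∑ i ∈ T, g i • (i : ℝ → ℝ) x := by
      refine Finset.sum_subset (Finset.filter_subset _ _) ?_
      intro i hiT hif
      have hne : lev i ≠ l₀ := by
        intro h
        exact hif (Finset.mem_filter.mpr ⟨hiT, h⟩)
      simp [hvanish i hiT hne x hx]
    rw [h3, h2, h1]
  -- embed the minimal-level functions into the local-independence index type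
  set T₀ : Finset HB := T.filter (fun i => lev i = l₀) with hT₀def
  have hmemI : ∀ i : HB, i ∈ T₀ →
      ((i : ℝ → ℝ) ∈ B l₀ ∧ ¬ ∀ x ∈ dom l₀, (i : ℝ → ℝ) x = 0) := by
    intro i hi
    have hil : lev i = l₀ := (Finset.mem_filter.mp hi).2
    have hPi : P l₀ (i : ℝ → ℝ) := hil ▸ hlev i
    refine ⟨hPi.1, ?_⟩
    intro hall
    obtain ⟨y, hysupp, hydom⟩ := hPi.2.2
    exact hysupp (hall y hydom)
  set I := {b : ℝ → ℝ // b ∈ B l₀ ∧ ¬ ∀ x ∈ dom l₀, b x = 0} with hIdef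
  set e : {i : HB // i ∈ T₀} → I := fun i => ⟨(i.1 : ℝ → ℝ), hmemI i.1 i.2⟩ with hedef
  have heinj : Function.Injective e := by
    intro a b hab
    have h1 := congrArg (fun j : I => (j : ℝ → ℝ)) hab
    simp only [hedef] at h1
    exact Subtype.ext (Subtype.ext h1)
  set t : Finset I := T₀.attach.image e with htdef
  set c : I → ℝ := fun j => if h : (j : ℝ → ℝ) ∈ HB then g ⟨(j : ℝ → ℝ), h⟩ else 0
    with hcdef
  have hce : ∀ i : {i : HB // i ∈ T₀}, c (e i) = g i.1 := by
    intro i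
    simp only [hcdef, hedef]
    rw [dif_pos i.1.2]
  -- the restricted sum vanishes
  have hres : ∑ j ∈ t, c j • (dom l₀).restrict (j : ℝ → ℝ) = 0 := by
    rw [htdef, Finset.sum_image (fun a _ b _ h => heinj h)]
    funext x
    have : ∑ i ∈ T₀.attach, c (e i) • (dom l₀).restrict ((i.1 : ℝ → ℝ)) x
        = ∑ i ∈ T₀, g i • (i : ℝ → ℝ) (x : ℝ) := by
      rw [← Finset.sum_attach T₀ (fun i => g i • (i : ℝ → ℝ) (x : ℝ))]
      refine Finset.sum_congr rfl ?_
      intro i _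
      rw [hce]
      rfl
    simp only [Finset.sum_apply, Pi.smul_apply]
    rw [this, hpt (x : ℝ) x.2]
    rfl
  have hLI := linearIndependent_iff'.mp (hlocind l₀ (dom l₀) (hdom_open l₀) hOne)
  have hi₁T₀ : i₁ ∈ T₀ := Finset.mem_filter.mpr ⟨hi₁T, hi₁lev⟩
  have hmem : e ⟨i₁, hi₁T₀⟩ ∈ t :=
    Finset.mem_image_of_mem e (Finset.mem_attach _ ⟨i₁, hi₁T₀⟩)
  have hzero : c (e ⟨i₁, hi₁T₀⟩) = 0 := hLI t c hres _ hmem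
  rw [hce ⟨i₁, hi₁T₀⟩] at hzero
  exact (Finset.mem_filter.mp hi₁T).2 hzero
end
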